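/- Let B_n ⊂ ℝ^n be the Euclidean ball of radius √n centered at the origin, let g = 1_{B_n}, and for t > 0 and y ∈ ℝ^n let g_{t,y}(x) = g(√(1−e^{−2t}) x + e^{−t} y). Then for every t > 0 and every half-space A ⊆ ℝ^n, E_{Y∼γ_n}[ Cov(g_{t,Y}, 1_A)² ] ≤ 1/n. -/

import Mathlib

/-!
Rotating `x` and `Y` together preserves `γ_n` and the radial function `g`, and a rotation carries
the half-space `{⟨x, a⟩ ≤ b}` onto any of the coordinate half-spaces `{‖a‖ x_i ≤ b}`. Hence
`E_Y[Cov(g_{t,Y}, 1_A)²]` is the same for all `n` of them, and `n` times it is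
`E_Y[∑_i Cov(g_{t,Y}, 1{‖a‖ x_i ≤ b})²]`. Under `γ_n` these coordinate indicators are independent,
hence uncorrelated, with variance at most `1/4`, so by Bessel's inequality in `L²(γ_n)` the sum is
at most `Var(g_{t,Y}) ≤ 1`.
-/

open MeasureTheory Real

noncomputable def gauss (n : ℕ) : Measure (Fin n → ℝ) :=
  Measure.pi fun _ => ProbabilityTheory.gaussianReal 0 1

/-- Expectation with respect to the standard Gaussian measure on `ℝ^n`. -/
noncomputable def gExp (n : ℕ) (f : (Fin n → ℝ) → ℝ) : ℝ := ∫ x, f x ∂(gauss n)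

/-- Covariance with respect to the standard Gaussian measure on `ℝ^n`. -/
noncomputable def gCov (n : ℕ) (f g : (Fin n → ℝ) → ℝ) : ℝ :=
  gExp n (fun x => (f x - gExp n f) * (g x - gExp n g))

/-- Variance with respect to the standard Gaussian measure on `ℝ^n`. -/
noncomputable def gVar (n : ℕ) (f : (Fin n → ℝ) → ℝ) : ℝ := gCov n f f

/-- A half-space `{x : ⟨x, a⟩ ≤ b}` in `ℝ^n`. -/
def IsHalfspace {n : ℕ} (A : Set (Fin n → ℝ)) : Prop :=
  ∃ (a : Fin n → ℝ) (b : ℝ), A = {x | ∑ i, x i * a i ≤ b}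

/-- The Ornstein--Uhlenbeck semigroup `P_t`. -/
noncomputable def ou (n : ℕ) (t : ℝ) (f : (Fin n → ℝ) → ℝ) : (Fin n → ℝ) → ℝ :=
  fun x => ∫ y, f (fun i => Real.exp (-t) * x i + Real.sqrt (1 - Real.exp (-2*t)) * y i)
    ∂(gauss n)

/-- The shifted/rescaled function `f_{t,y}(x) = f(√(1-e^{-2t}) x + e^{-t} y)`. -/
noncomputable def shift (n : ℕ) (f : (Fin n → ℝ) → ℝ) (t : ℝ) (y : Fin n → ℝ) :
    (Fin n → ℝ) → ℝ :=
  fun x => f (fun i => Real.sqrt (1 - Real.exp (-2*t)) * x i + Real.exp (-t) * y i)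

/-- `M(g)`: the supremum over half-spaces `A` of `Cov(g, 1_A)`. -/
noncomputable def Mg (n : ℕ) (g : (Fin n → ℝ) → ℝ) : ℝ :=
  ⨆ A : {A : Set (Fin n → ℝ) // IsHalfspace A}, gCov n g (Set.indicator A.1 1)

/-- `w₁(f) = Σ_i (E[X_i f(X)])²`. -/
noncomputable def w1g (n : ℕ) (f : (Fin n → ℝ) → ℝ) : ℝ :=
  ∑ i : Fin n, (gExp n (fun x => x i * f x)) ^ 2

open ProbabilityTheory
open scoped RealInnerProductSpace

theorem sum_sq_inner_le_norm_sq_of_pairwise_orthogonal {E ι : Type*} [NormedAddCommGroup E]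
    [InnerProductSpace ℝ E] (s : Finset ι) {v : ι → E}
    (hv : Pairwise fun i j => ⟪v i, v j⟫ = 0) (hv1 : ∀ i, ‖v i‖ ≤ 1) (x : E) :
    ∑ i ∈ s, ⟪v i, x⟫ ^ 2 ≤ ‖x‖ ^ 2 := by
  set T := ∑ i ∈ s, ⟪v i, x⟫ • v i
  have hTx : ⟪x, T⟫ = ∑ i ∈ s, ⟪v i, x⟫ ^ 2 := by
    simp only [T, inner_sum, real_inner_smul_right, real_inner_comm x, sq]
  have hTT : ⟪T, T⟫ = ∑ i ∈ s, ⟪v i, x⟫ ^ 2 * ‖v i‖ ^ 2 := by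
    simp only [T, sum_inner, inner_sum, real_inner_smul_left, real_inner_smul_right]
    refine Finset.sum_congr rfl fun i hi => ?_
    rw [Finset.sum_eq_single i (fun j _ hji => by rw [hv hji]; ring) (absurd hi),
      real_inner_self_eq_norm_sq]
    ring
  have hTT_le : ‖T‖ ^ 2 ≤ ∑ i ∈ s, ⟪v i, x⟫ ^ 2 := by
    rw [← real_inner_self_eq_norm_sq, hTT]
    gcongr with i
    exact mul_le_of_le_one_right (sq_nonneg _) (pow_le_one₀ (norm_nonneg _) (hv1 i))
  nlinarith [norm_sub_sq_real x T, sq_nonneg ‖x - T‖]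

section Covariance

variable {Ω : Type*} [MeasurableSpace Ω] {μ : Measure Ω} [IsProbabilityMeasure μ]

noncomputable def centeredL2 {X : Ω → ℝ} (hX : MemLp X 2 μ) : Lp ℝ 2 μ :=
  (hX.sub (memLp_const μ[X])).toLp

lemma covariance_eq_inner_centeredL2 {X Y : Ω → ℝ} (hX : MemLp X 2 μ) (hY : MemLp Y 2 μ) :
    cov[X, Y; μ] = ⟪centeredL2 hX, centeredL2 hY⟫ := by
  rw [L2.inner_def, covariance]
  refine integral_congr_ae ?_
  filter_upwards [MemLp.coeFn_toLp (hX.sub (memLp_const μ[X])),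
    MemLp.coeFn_toLp (hY.sub (memLp_const μ[Y]))] with ω hXω hYω
  rw [centeredL2, centeredL2, hXω, hYω, Real.inner_apply]
  rfl

lemma variance_eq_norm_centeredL2_sq {X : Ω → ℝ} (hX : MemLp X 2 μ) :
    Var[X; μ] = ‖centeredL2 hX‖ ^ 2 := by
  rw [← covariance_self hX.aemeasurable, covariance_eq_inner_centeredL2 hX hX,
    real_inner_self_eq_norm_sq]

theorem sum_sq_covariance_le_variance {ι : Type*} (s : Finset ι) {X : Ω → ℝ}
    {Y : ι → Ω → ℝ} (hX : MemLp X 2 μ) (hY : ∀ i, MemLp (Y i) 2 μ)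
    (hcov : Pairwise fun i j => cov[Y i, Y j; μ] = 0) (hvar : ∀ i, Var[Y i; μ] ≤ 1) :
    ∑ i ∈ s, cov[X, Y i; μ] ^ 2 ≤ Var[X; μ] := by
  calc ∑ i ∈ s, cov[X, Y i; μ] ^ 2 = ∑ i ∈ s, ⟪centeredL2 (hY i), centeredL2 hX⟫ ^ 2 := by
        simp_rw [covariance_comm X, covariance_eq_inner_centeredL2 (hY _) hX]
    _ ≤ ‖centeredL2 hX‖ ^ 2 := by
        refine sum_sq_inner_le_norm_sq_of_pairwise_orthogonal s (fun i j hij => ?_)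
          (fun i => ?_) _
        · dsimp only
          rw [← covariance_eq_inner_centeredL2, hcov hij]
        · rw [← sq_le_one_iff₀ (norm_nonneg _), ← variance_eq_norm_centeredL2_sq]
          exact hvar i
    _ = Var[X; μ] := (variance_eq_norm_centeredL2_sq hX).symm

lemma memLp_of_forall_mem_Icc_zero_one {X : Ω → ℝ} (hX : Measurable X)
    (h01 : ∀ ω, X ω ∈ Set.Icc 0 1) (p : ENNReal) : MemLp X p μ :=
  MemLp.of_bound hX.aestronglyMeasurable 1 <| ae_of_all _ fun ω => by
    rw [Real.norm_eq_abs, abs_le]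
    exact ⟨by linarith [(h01 ω).1], (h01 ω).2⟩

lemma variance_le_one_of_forall_mem_Icc_zero_one {X : Ω → ℝ} (hX : Measurable X)
    (h01 : ∀ ω, X ω ∈ Set.Icc 0 1) : Var[X; μ] ≤ 1 :=
  (variance_le_sq_of_bounded (ae_of_all _ h01) hX.aemeasurable).trans (by norm_num)

end Covariance

theorem sum_sq_covariance_pi_le_variance {ι : Type*} [Fintype ι] {Ω : ι → Type*}
    [∀ i, MeasurableSpace (Ω i)] {μ : ∀ i, Measure (Ω i)} [∀ i, IsProbabilityMeasure (μ i)]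
    {X : (∀ i, Ω i) → ℝ} (hX : MemLp X 2 (Measure.pi μ)) {h : ∀ i, Ω i → ℝ}
    (hh : ∀ i, MemLp (h i) 2 (μ i)) (hvar : ∀ i, Var[h i; μ i] ≤ 1) :
    ∑ i, cov[X, fun ω => h i (ω i); Measure.pi μ] ^ 2 ≤ Var[X; Measure.pi μ] := by
  have hY : ∀ i, MemLp (fun ω => h i (ω i)) 2 (Measure.pi μ) := fun i =>
    (hh i).comp_measurePreserving (measurePreserving_eval μ i)
  refine sum_sq_covariance_le_variance _ hX hY (fun i j hij => ?_) (fun i => ?_)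
  · exact ((iIndepFun_pi fun i => (hh i).aestronglyMeasurable.aemeasurable).indepFun
      hij).covariance_eq_zero (hY i) (hY j)
  · rw [(measurePreserving_eval μ i).variance_fun_comp (hh i).aestronglyMeasurable.aemeasurable]
    exact hvar i

section Rotation

variable {ι : Type*} [Fintype ι]

noncomputable def isometryPi (R : EuclideanSpace ℝ ι ≃ₗᵢ[ℝ] EuclideanSpace ℝ ι) :
    (ι → ℝ) ≃L[ℝ] (ι → ℝ) :=
  (EuclideanSpace.equiv ι ℝ).symm.trans (R.toContinuousLinearEquiv.trans (EuclideanSpace.equiv ι ℝ))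

lemma isometryPi_apply (R : EuclideanSpace ℝ ι ≃ₗᵢ[ℝ] EuclideanSpace ℝ ι) (x : ι → ℝ) :
    isometryPi R x = (R (WithLp.toLp 2 x)).ofLp :=
  rfl

lemma measurePreserving_isometryPi (R : EuclideanSpace ℝ ι ≃ₗᵢ[ℝ] EuclideanSpace ℝ ι) :
    MeasurePreserving (isometryPi R) (Measure.pi fun _ : ι => gaussianReal 0 1)
      (Measure.pi fun _ : ι => gaussianReal 0 1) := by
  have hLp : MeasurePreserving (MeasurableEquiv.toLp 2 (ι → ℝ))
      (Measure.pi fun _ : ι => gaussianReal 0 1) (stdGaussian (EuclideanSpace ℝ ι)) :=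
    ⟨(MeasurableEquiv.toLp 2 (ι → ℝ)).measurable, map_pi_eq_stdGaussian⟩
  have hR : MeasurePreserving R (stdGaussian _) (stdGaussian _) :=
    ⟨R.continuous.measurable, stdGaussian_map R⟩
  exact hLp.symm.comp (hR.comp hLp)

lemma sum_sq_isometryPi (R : EuclideanSpace ℝ ι ≃ₗᵢ[ℝ] EuclideanSpace ℝ ι) (x : ι → ℝ) :
    ∑ i, isometryPi R x i ^ 2 = ∑ i, x i ^ 2 := by
  rw [isometryPi_apply, ← EuclideanSpace.real_norm_sq_eq, R.norm_map,
    EuclideanSpace.real_norm_sq_eq]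

lemma exists_isometryPi_sum_mul_eq [DecidableEq ι] (a : ι → ℝ) (i : ι) :
    ∃ R : EuclideanSpace ℝ ι ≃ₗᵢ[ℝ] EuclideanSpace ℝ ι,
      ∀ x, ∑ j, isometryPi R x j * a j = ‖WithLp.toLp 2 a‖ * x i := by
  set a' := WithLp.toLp 2 a
  set e := ‖a'‖ • EuclideanSpace.single i (1 : ℝ)
  have he : ‖e‖ = ‖a'‖ := by simp [e, norm_smul]
  set R := (ℝ ∙ (e - a'))ᗮ.reflection
  refine ⟨R, fun x => ?_⟩
  calc ∑ j, isometryPi R x j * a j = ⟪R (WithLp.toLp 2 x), R e⟫ := by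
        rw [Submodule.reflection_sub he, PiLp.inner_apply]
        simp [isometryPi_apply, a', mul_comm]
    _ = ‖a'‖ * x i := by
        rw [R.inner_map_map, real_inner_smul_right, EuclideanSpace.inner_single_right]
        simp

end Rotation

lemma MeasureTheory.MeasurePreserving.covariance_comp {Ω Ω' : Type*} [MeasurableSpace Ω]
    [MeasurableSpace Ω'] {μ : Measure Ω} {ν : Measure Ω'} {φ : Ω → Ω'}
    (hφ : MeasurePreserving φ μ ν) (hemb : MeasurableEmbedding φ) (X Y : Ω' → ℝ) :
    cov[X ∘ φ, Y ∘ φ; μ] = cov[X, Y; ν] := by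
  simp only [covariance, Function.comp_apply, hφ.integral_comp hemb]
  exact hφ.integral_comp hemb fun ω => (X ω - ν[X]) * (Y ω - ν[Y])

lemma Set.indicator_one_mem_Icc {α : Type*} (s : Set α) (x : α) :
    s.indicator (1 : α → ℝ) x ∈ Set.Icc 0 1 := by
  by_cases hx : x ∈ s <;> simp [hx]

section Shift

variable {n : ℕ}

instance isProbabilityMeasure_gauss : IsProbabilityMeasure (gauss n) := by
  unfold gauss
  infer_instance

lemma measurable_uncurry_shift {f : (Fin n → ℝ) → ℝ} (hf : Measurable f) (t : ℝ) :
    Measurable (Function.uncurry (shift n f t)) :=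
  hf.comp (by fun_prop)

lemma measurable_gCov_shift {f k : (Fin n → ℝ) → ℝ} (hf : Measurable f) (hk : Measurable k)
    (t : ℝ) : Measurable fun y => gCov n (shift n f t y) k := by
  have hS := measurable_uncurry_shift hf t
  have hE : Measurable fun y => gExp n (shift n f t y) :=
    hS.stronglyMeasurable.integral_prod_right'.measurable
  exact (((hS.sub (hE.comp measurable_fst)).mul
    ((hk.comp measurable_snd).sub_const _)).stronglyMeasurable.integral_prod_right').measurable

lemma shift_apply_comp {f : (Fin n → ℝ) → ℝ} {φ : (Fin n → ℝ) ≃L[ℝ] (Fin n → ℝ)} (hf : f ∘ φ = f)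
    (t : ℝ) (y : Fin n → ℝ) : shift n f t (φ y) ∘ φ = shift n f t y := by
  funext x
  conv_rhs => rw [shift, ← hf]
  have hlin : ∀ z w : Fin n → ℝ, (fun i => √(1 - rexp (-2 * t)) * z i + rexp (-t) * w i) =
      √(1 - rexp (-2 * t)) • z + rexp (-t) • w := fun _ _ => rfl
  simp only [shift, Function.comp_apply, hlin, map_add, map_smul]

lemma gExp_sq_gCov_shift_comp {f : (Fin n → ℝ) → ℝ} {φ : (Fin n → ℝ) ≃L[ℝ] (Fin n → ℝ)}
    (hφ : MeasurePreserving φ (gauss n) (gauss n)) (hf : f ∘ φ = f) (t : ℝ)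
    (k : (Fin n → ℝ) → ℝ) :
    gExp n (fun y => gCov n (shift n f t y) (k ∘ φ) ^ 2) =
      gExp n (fun y => gCov n (shift n f t y) k ^ 2) := by
  have hemb := φ.toHomeomorph.measurableEmbedding
  have hcov : ∀ y, gCov n (shift n f t y) (k ∘ φ) = gCov n (shift n f t (φ y)) k := fun y => by
    rw [← shift_apply_comp hf t y]
    exact hφ.covariance_comp hemb _ _
  simp_rw [hcov]
  exact hφ.integral_comp hemb (fun y => gCov n (shift n f t y) k ^ 2)

lemma gExp_sq_gCov_shift_inner_eq_coord {f : (Fin n → ℝ) → ℝ}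
    (hf : ∀ x y, ∑ i, x i ^ 2 = ∑ i, y i ^ 2 → f x = f y) (t : ℝ) (k : ℝ → ℝ)
    (a : Fin n → ℝ) (i : Fin n) :
    gExp n (fun y => gCov n (shift n f t y) (fun x => k (∑ j, x j * a j)) ^ 2) =
      gExp n (fun y => gCov n (shift n f t y) (fun x => k (‖WithLp.toLp 2 a‖ * x i)) ^ 2) := by
  obtain ⟨R, hR⟩ := exists_isometryPi_sum_mul_eq a i
  have hfR : f ∘ isometryPi R = f := funext fun x => hf _ _ (sum_sq_isometryPi R x)
  have hk : (fun x => k (‖WithLp.toLp 2 a‖ * x i)) =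
      (fun x => k (∑ j, x j * a j)) ∘ isometryPi R :=
    funext fun x => by rw [Function.comp_apply, hR]
  rw [hk, gExp_sq_gCov_shift_comp (measurePreserving_isometryPi R) hfR]

end Shift

section Bessel

variable {n : ℕ}

lemma sum_sq_gCov_coord_le_one {f : (Fin n → ℝ) → ℝ} (hf : Measurable f)
    (hf01 : ∀ x, f x ∈ Set.Icc 0 1) {h : ℝ → ℝ} (hh : Measurable h)
    (hh01 : ∀ s, h s ∈ Set.Icc 0 1) :
    ∑ i, gCov n f (fun x => h (x i)) ^ 2 ≤ 1 :=
  (sum_sq_covariance_pi_le_variance (memLp_of_forall_mem_Icc_zero_one hf hf01 2)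
    (fun _ => memLp_of_forall_mem_Icc_zero_one hh hh01 2)
    (fun _ => variance_le_one_of_forall_mem_Icc_zero_one hh hh01)).trans
    (variance_le_one_of_forall_mem_Icc_zero_one hf hf01)

lemma sum_gExp_sq_gCov_shift_coord_le_one {f : (Fin n → ℝ) → ℝ} (hf : Measurable f)
    (hf01 : ∀ x, f x ∈ Set.Icc 0 1) {h : ℝ → ℝ} (hh : Measurable h)
    (hh01 : ∀ s, h s ∈ Set.Icc 0 1) (t : ℝ) :
    ∑ i, gExp n (fun y => gCov n (shift n f t y) (fun x => h (x i)) ^ 2) ≤ 1 := by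
  have hbessel : ∀ y, ∑ i, gCov n (shift n f t y) (fun x => h (x i)) ^ 2 ≤ 1 := fun y =>
    sum_sq_gCov_coord_le_one (measurable_uncurry_shift hf t).of_uncurry_left
      (fun _ => hf01 _) hh hh01
  have hint : ∀ i, Integrable (fun y => gCov n (shift n f t y) (fun x => h (x i)) ^ 2)
      (gauss n) := fun i =>
    Integrable.of_bound ((measurable_gCov_shift hf (hh.comp (measurable_pi_apply i)) t).pow_const
      2).aestronglyMeasurable 1 <| ae_of_all _ fun y => by
        rw [Real.norm_of_nonneg (sq_nonneg _)]
        refine le_trans ?_ (hbessel y)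
        exact Finset.single_le_sum (f := fun j => gCov n (shift n f t y) (fun x => h (x j)) ^ 2)
          (fun j _ => sq_nonneg _) (Finset.mem_univ i)
  calc ∑ i, gExp n (fun y => gCov n (shift n f t y) (fun x => h (x i)) ^ 2)
      = ∫ y, ∑ i, gCov n (shift n f t y) (fun x => h (x i)) ^ 2 ∂gauss n :=
        (integral_finsetSum _ fun i _ => hint i).symm
    _ ≤ ∫ _, 1 ∂gauss n := integral_mono_of_nonneg
        (ae_of_all _ fun y => Finset.sum_nonneg fun i _ => sq_nonneg _) (integrable_const 1)
        (ae_of_all _ hbessel)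
    _ = 1 := by simp

end Bessel

theorem stmt3_general (n : ℕ) (t : ℝ) (A : Set (Fin n → ℝ))
    (hA : IsHalfspace A) :
    gExp n (fun y =>
      (gCov n (shift n (Set.indicator {x : Fin n → ℝ | ∑ i, (x i) ^ 2 ≤ (n : ℝ)} 1) t y)
        (Set.indicator A 1)) ^ 2) ≤ 1 / n := by
  obtain ⟨a, b, rfl⟩ := hA
  rcases Nat.eq_zero_or_pos n with rfl | hn
  · -- `1 / 0 = 0` in `ℝ`, but on `ℝ⁰` every covariance vanishes.
    have hcov : ∀ f g : (Fin 0 → ℝ) → ℝ, gCov 0 f g = 0 := fun f g => by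
      rw [show f = fun _ => f 0 from funext fun x => congrArg f (Subsingleton.elim x 0)]
      exact covariance_const_left _
    simp [hcov, gExp]
  set f := {x : Fin n → ℝ | ∑ i, x i ^ 2 ≤ (n : ℝ)}.indicator (1 : (Fin n → ℝ) → ℝ)
  set h : ℝ → ℝ := fun s => (Set.Iic b).indicator 1 (‖WithLp.toLp 2 a‖ * s)
  have hf_radial : ∀ x y, ∑ i, x i ^ 2 = ∑ i, y i ^ 2 → f x = f y := fun x y hxy => by
    simp only [f, Set.indicator_apply, Set.mem_ofPred_eq, Pi.one_apply, hxy]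
  have hsum := sum_gExp_sq_gCov_shift_coord_le_one (f := f)
    (measurable_one.indicator (measurableSet_le (by fun_prop) measurable_const))
    (Set.indicator_one_mem_Icc _) (h := h)
    ((measurable_one.indicator measurableSet_Iic).comp (measurable_const_mul _))
    (fun _ => Set.indicator_one_mem_Icc _ _) t
  rw [Finset.sum_congr rfl fun i _ =>
    (gExp_sq_gCov_shift_inner_eq_coord hf_radial t ((Set.Iic b).indicator 1) a i).symm] at hsum
  simp only [Finset.sum_const, Finset.card_univ, Fintype.card_fin, nsmul_eq_mul] at hsum
  rw [le_div_iff₀ (Nat.cast_pos.mpr hn), mul_comm]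
  exact hsum

theorem stmt3 (n : ℕ) (t : ℝ) (ht : 0 < t) (A : Set (Fin n → ℝ))
    (hA : IsHalfspace A) :
    gExp n (fun y =>
      (gCov n (shift n (Set.indicator {x : Fin n → ℝ | ∑ i, (x i) ^ 2 ≤ (n : ℝ)} 1) t y)
        (Set.indicator A 1)) ^ 2) ≤ 1 / n :=
  stmt3_general n t A hA
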